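/- Let A be an n×n real matrix and c a 1×n row vector such that (A, c) is completely observable. Then for all sufficiently small λ > 0, the pair (e^{λA}, c) is also completely observable; i.e., the matrix with rows c, c e^{λA}, ..., c e^{(n-1)λA} is invertible. -/

import Mathlib

/-!
Write `e^{λA} = 1 + λ B_λ` with `B_λ = λ⁻¹ (e^{λA} - 1)`, so `B_λ → A` as `λ → 0`.
Shifting `E ↦ E + 1` multiplies the observability matrix of `(E, c)` by the lower unitriangular
Pascal matrix, and scaling `E ↦ λE` multiplies its `i`-th row by `λ^i`. Hence
`det O(e^{λA}, c) = (∏ λ^i) · det O(B_λ, c)`, and the right-hand factor tends to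
`det O(A, c) ≠ 0`.
-/

open Matrix Filter Topology

section Observability

variable {R : Type*} [CommRing R] {n : ℕ}

def observabilityMatrix (c : Fin n → R) (A : Matrix (Fin n) (Fin n) R) :
    Matrix (Fin n) (Fin n) R :=
  of fun i => c ᵥ* A ^ (i : ℕ)

lemma observabilityMatrix_add_one (c : Fin n → R) (A : Matrix (Fin n) (Fin n) R) :
    observabilityMatrix c (A + 1) =
      (of fun i k : Fin n => ((i : ℕ).choose k : R)) * observabilityMatrix c A := by
  ext i j
  have hbinom : (A + 1) ^ (i : ℕ) =
      ∑ k ∈ Finset.range ((i : ℕ) + 1), ((i : ℕ).choose k : R) • A ^ k := by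
    rw [(Commute.one_right A).add_pow]
    refine Finset.sum_congr rfl fun k _ => ?_
    rw [one_pow, mul_one, Nat.cast_smul_eq_nsmul, nsmul_eq_mul, Nat.cast_comm]
  have hpow : (A + 1) ^ (i : ℕ) = ∑ k ∈ Finset.range n, ((i : ℕ).choose k : R) • A ^ k := by
    rw [hbinom]
    refine Finset.sum_subset (Finset.range_subset_range.mpr i.isLt) fun k _ hk => ?_
    simp [Nat.choose_eq_zero_of_lt (by simpa using hk : (i : ℕ) < k)]
  simp only [observabilityMatrix, of_apply, mul_apply, hpow, Matrix.vecMul_sum, vecMul_smul,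
    Finset.sum_apply, Pi.smul_apply, smul_eq_mul]
  exact (Fin.sum_univ_eq_sum_range (fun k => ((i : ℕ).choose k : R) * (c ᵥ* A ^ k) j) n).symm

lemma det_observabilityMatrix_add_one (c : Fin n → R) (A : Matrix (Fin n) (Fin n) R) :
    (observabilityMatrix c (A + 1)).det = (observabilityMatrix c A).det := by
  have hlower : (of fun i k : Fin n => ((i : ℕ).choose k : R)).IsLowerTriangular :=
    fun i k hik => by simp [Nat.choose_eq_zero_of_lt (show (i : ℕ) < k from hik)]
  rw [observabilityMatrix_add_one, det_mul, det_of_isLowerTriangular _ hlower]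
  simp

lemma det_observabilityMatrix_smul (c : Fin n → R) (t : R) (A : Matrix (Fin n) (Fin n) R) :
    (observabilityMatrix c (t • A)).det =
      (∏ i : Fin n, t ^ (i : ℕ)) * (observabilityMatrix c A).det := by
  rw [← det_mul_column]
  congr 1
  ext i j
  simp [observabilityMatrix, smul_pow, vecMul_smul]

lemma continuous_det_observabilityMatrix [TopologicalSpace R] [IsTopologicalRing R]
    (c : Fin n → R) :
    Continuous fun A : Matrix (Fin n) (Fin n) R => (observabilityMatrix c A).det :=
  (continuous_matrix fun (i : Fin n) j => (continuous_apply j).comp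
    (continuous_const.matrix_vecMul (continuous_id.pow (i : ℕ)))).matrix_det

end Observability

lemma tendsto_slope_exp_smul {𝕂 𝔸 : Type*} [RCLike 𝕂] [NormedRing 𝔸] [NormedAlgebra 𝕂 𝔸]
    [CompleteSpace 𝔸] (a : 𝔸) :
    Tendsto (fun t : 𝕂 => t⁻¹ • (NormedSpace.exp (t • a) - 1)) (𝓝[≠] 0) (𝓝 a) := by
  have h := (hasDerivAt_exp_smul_const (𝕂 := 𝕂) a 0).tendsto_slope
  simp only [zero_smul, NormedSpace.exp_zero, one_mul] at h
  convert h using 2 with t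
  simp [slope_def_module]

lemma Matrix.tendsto_slope_exp_smul {n : ℕ} (A : Matrix (Fin n) (Fin n) ℝ) :
    Tendsto (fun t : ℝ => t⁻¹ • (NormedSpace.exp (t • A) - 1)) (𝓝[≠] 0) (𝓝 A) := by
  -- any normed-algebra structure inducing the product topology will do
  let := Matrix.linftyOpNormedRing (n := Fin n) (α := ℝ)
  let := Matrix.linftyOpNormedAlgebra (n := Fin n) (R := ℝ) (α := ℝ)
  exact _root_.tendsto_slope_exp_smul A

/-- If `(A, c)` is completely observable, then for all sufficiently small `λ > 0` the pair
`(e^{λA}, c)` is also completely observable: the matrix with rows `c e^{iλA}` is invertible. -/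
theorem stmt18 (n : ℕ) (A : Matrix (Fin n) (Fin n) ℝ) (c : Fin n → ℝ)
    (hobs : IsUnit (Matrix.of fun i j : Fin n => (c ᵥ* A ^ (i : ℕ)) j).det) :
    ∃ ε > 0, ∀ lam : ℝ, 0 < lam → lam < ε →
      IsUnit (Matrix.of fun i j : Fin n =>
        (c ᵥ* (NormedSpace.exp (lam • A)) ^ (i : ℕ)) j).det := by
  have hA : (observabilityMatrix c A).det ≠ 0 := hobs.ne_zero
  have hslope : ∀ᶠ t in 𝓝[>] (0 : ℝ),
      (observabilityMatrix c (t⁻¹ • (NormedSpace.exp (t • A) - 1))).det ≠ 0 :=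
    (((continuous_det_observabilityMatrix c).tendsto A).comp
      (Matrix.tendsto_slope_exp_smul A) |>.eventually_ne hA).filter_mono
      (nhdsWithin_mono _ fun t ht => ne_of_gt ht)
  obtain ⟨ε, hε, hsub⟩ := mem_nhdsGT_iff_exists_Ioo_subset.1 hslope
  refine ⟨ε, hε, fun t ht htε => isUnit_iff_ne_zero.2 ?_⟩
  have hexp : NormedSpace.exp (t • A) = t • (t⁻¹ • (NormedSpace.exp (t • A) - 1)) + 1 := by
    rw [smul_smul, mul_inv_cancel₀ ht.ne', one_smul, sub_add_cancel]
  change (observabilityMatrix c _).det ≠ 0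
  rw [hexp, det_observabilityMatrix_add_one, det_observabilityMatrix_smul]
  exact mul_ne_zero (Finset.prod_ne_zero_iff.2 fun i _ => pow_ne_zero _ ht.ne') (hsub ⟨ht, htε⟩)
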